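/- arXiv:1806.05546 — 3 statements merged into one kernel-verified Lean document; each statement's English description precedes it below -/
import Mathlib

section
/- At every point f ∈ ℂ^N at which all entries of Af are nonzero (i.e., (Af)_m ≠ 0 for m = 1,…,M), the amplitude loss L, viewed as a real-differentiable function of the real and imaginary parts of f (ℂ^N ≅ ℝ^{2N} with real inner product Re⟨·,·⟩), is differentiable at f, and its gradient, identified with an element of ℂ^N, equals 2·G(f) = 2·A^H(Af − b ⊙ sgn(Af)). -/
open scoped BigOperators
open Matrix

noncomputable section

namespace AWF

/-- Complex signum: `z/|z|` for `z ≠ 0`, and `0` at `0`. -/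
def csgn (z : ℂ) : ℂ := if z = 0 then 0 else z / (‖z‖ : ℂ)

variable {M N : ℕ}

/-- Amplitude loss `L(f) = ∑ (b_m − |(Af)_m|)²`. -/
def ampLoss (A : Matrix (Fin M) (Fin N) ℂ) (b : Fin M → ℝ) (f : Fin N → ℂ) : ℝ :=
  ∑ m, (b m - ‖A.mulVec f m‖) ^ 2

/-- Generalized (Wirtinger) gradient `G(f) = Aᴴ(Af − b ⊙ sgn(Af))`. -/
def wGrad (A : Matrix (Fin M) (Fin N) ℂ) (b : Fin M → ℝ) (f : Fin N → ℂ) : Fin N → ℂ :=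
  Aᴴ.mulVec (fun m => A.mulVec f m - (b m : ℂ) * csgn (A.mulVec f m))

/-- Euclidean (ℓ₂) norm of a complex vector. -/
def norm2 {n : ℕ} (v : Fin n → ℂ) : ℝ := Real.sqrt (∑ i, ‖v i‖ ^ 2)

/-- The largest eigenvalue of the positive semidefinite Hermitian matrix `Aᴴ A`. -/
def lamMax (A : Matrix (Fin M) (Fin N) ℂ) : ℝ :=
  ⨆ i, (Matrix.isHermitian_conjTranspose_mul_self A).eigenvalues i

end AWF

/-! The loss is `∑ₘ (bₘ - ‖zₘ‖)²` composed with the real-linear map `f ↦ Af`. Away from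
`z = 0`, `‖·‖` is differentiable with gradient `z / ‖z‖`, so the gradient of `(c - ‖z‖)²` is
`2 (1 - c / ‖z‖) z = 2 (z - c sgn z)`; pulling back along `A` applies the adjoint `Aᴴ`. -/

namespace AWF

open scoped ComplexConjugate InnerProductSpace

section InnerProductSpace

variable {E : Type*} [NormedAddCommGroup E] [InnerProductSpace ℝ E] {x : E}

theorem hasFDerivAt_norm_of_ne_zero (hx : x ≠ 0) :
    HasFDerivAt (fun y : E => ‖y‖) (‖x‖⁻¹ • innerSL ℝ x) x := by
  have hsq : ‖x‖ ^ 2 ≠ 0 := by positivity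
  convert (hasStrictFDerivAt_norm_sq x).hasFDerivAt.sqrt hsq using 1
  · simp [Real.sqrt_sq (norm_nonneg _)]
  · rw [Real.sqrt_sq (norm_nonneg _), ← Nat.cast_smul_eq_nsmul ℝ, smul_smul]
    congr 1
    field_simp
    norm_num

theorem hasFDerivAt_sub_norm_sq (c : ℝ) (hx : x ≠ 0) :
    HasFDerivAt (fun y : E => (c - ‖y‖) ^ 2) (innerSL ℝ ((2 * (1 - c / ‖x‖)) • x)) x := by
  have hnorm := ((hasFDerivAt_norm_of_ne_zero hx).const_sub c).pow 2
  refine hnorm.congr_fderiv ?_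
  ext y
  have hx' : ‖x‖ ≠ 0 := norm_ne_zero_iff.2 hx
  simp only [Nat.add_one_sub_one, pow_one, nsmul_eq_mul, Nat.cast_ofNat, smul_neg, _root_.neg_apply,
    _root_.smul_apply, coe_innerSL_apply, smul_eq_mul, map_smul]
  field_simp
  ring

theorem hasFDerivAt_sum_sub_norm_sq {ι : Type*} [Fintype ι] (c : ι → ℝ) {z : ι → E}
    (hz : ∀ i, z i ≠ 0) :
    HasFDerivAt (fun w : ι → E => ∑ i, (c i - ‖w i‖) ^ 2)
      (∑ i, (innerSL ℝ ((2 * (1 - c i / ‖z i‖)) • z i)).comp (ContinuousLinearMap.proj i)) z :=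
  HasFDerivAt.fun_sum fun i _ =>
    (hasFDerivAt_sub_norm_sq (c i) (hz i)).comp (g := fun y => (c i - ‖y‖) ^ 2) z
      (hasFDerivAt_apply i z)

end InnerProductSpace

theorem two_mul_sub_mul_csgn (c : ℝ) {z : ℂ} (hz : z ≠ 0) :
    2 * (z - c * csgn z) = (2 * (1 - c / ‖z‖)) • z := by
  have : (‖z‖ : ℂ) ≠ 0 := by simpa using hz
  rw [csgn, if_neg hz, Complex.real_smul]
  push_cast
  field_simp

theorem two_mul_wGrad {M N : ℕ} {A : Matrix (Fin M) (Fin N) ℂ} (b : Fin M → ℝ) {f : Fin N → ℂ}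
    (hf : ∀ m, (A *ᵥ f) m ≠ 0) (n : Fin N) :
    2 * wGrad A b f n = (Aᴴ *ᵥ fun m => (2 * (1 - b m / ‖(A *ᵥ f) m‖)) • (A *ᵥ f) m) n := by
  simp only [wGrad, ← two_mul_sub_mul_csgn _ (hf _)]
  rw [← smul_eq_mul, ← Pi.smul_apply, ← mulVec_smul]
  rfl

theorem sum_inner_mulVec {ι κ : Type*} [Fintype ι] [Fintype κ] (A : Matrix ι κ ℂ)
    (u : ι → ℂ) (v : κ → ℂ) :
    ∑ i, ⟪u i, (A *ᵥ v) i⟫_ℝ = (∑ j, conj ((Aᴴ *ᵥ u) j) * v j).re := by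
  have h : star (Aᴴ *ᵥ u) ⬝ᵥ v = star u ⬝ᵥ A *ᵥ v := by
    rw [star_mulVec, conjTranspose_conjTranspose, dotProduct_mulVec]
  simp only [dotProduct, Pi.star_apply, Complex.star_def] at h
  rw [h, Complex.re_sum]
  simp only [Complex.inner, mul_comm]

theorem ampLoss_hasGradient_general
    {M N : ℕ} (A : Matrix (Fin M) (Fin N) ℂ) (b : Fin M → ℝ)
    (f : Fin N → ℂ) (hf : ∀ m, A.mulVec f m ≠ 0) :
    ∃ φ : (Fin N → ℂ) →L[ℝ] ℝ,
      HasFDerivAt (ampLoss A b) φ f ∧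
        ∀ v : Fin N → ℂ,
          φ v = (∑ n, (starRingEnd ℂ) (2 * wGrad A b f n) * v n).re := by
  let Aℝ : (Fin N → ℂ) →L[ℝ] (Fin M → ℂ) := (A.mulVecLin.restrictScalars ℝ).toContinuousLinearMap
  refine ⟨_, (hasFDerivAt_sum_sub_norm_sq b hf).comp f Aℝ.hasFDerivAt, fun v => ?_⟩
  simp only [two_mul_wGrad b hf, ← sum_inner_mulVec]
  simp [Aℝ]

/-- At every `f` with all entries of `Af` nonzero, the amplitude loss `L`
is (real-)differentiable at `f`, and its gradient with respect to the real inner product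
`Re⟨u,v⟩ = Re(∑ conj(u_n) v_n)` is `2·G(f)`. -/
theorem ampLoss_hasGradient
    {M N : ℕ} (A : Matrix (Fin M) (Fin N) ℂ) (b : Fin M → ℝ) (hb : ∀ m, 0 ≤ b m)
    (f : Fin N → ℂ) (hf : ∀ m, A.mulVec f m ≠ 0) :
    ∃ φ : (Fin N → ℂ) →L[ℝ] ℝ,
      HasFDerivAt (ampLoss A b) φ f ∧
        ∀ v : Fin N → ℂ,
          φ v = (∑ n, (starRingEnd ℂ) (2 * wGrad A b f n) * v n).re :=
  ampLoss_hasGradient_general A b f hf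

end AWF
end
end

section
/- For every ε > 0, every f, u ∈ ℂ^N, and every t ∈ ℝ, the function φ(t) = L_ε(f + t·u) is twice differentiable in t and its second derivative satisfies φ''(t) ≤ 2·‖A‖²·‖u‖₂², where ‖A‖ is the operator (spectral) norm of A. -/
open scoped BigOperators
open Matrix

noncomputable section

namespace AWF

variable {M N : ℕ}

/-- Smoothed amplitude loss `L_ε(f) = ∑ (√(|(Af)_m|² + ε) − b_m)²`. -/
def smLoss (A : Matrix (Fin M) (Fin N) ℂ) (b : Fin M → ℝ) (ε : ℝ) (f : Fin N → ℂ) : ℝ :=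
  ∑ m, (Real.sqrt (‖A.mulVec f m‖ ^ 2 + ε) - b m) ^ 2

/-- Wirtinger gradient of the smoothed loss:
`g_ε(f) = ∑_m (1 − b_m/√(|(Af)_m|²+ε)) (a_m a_mᴴ) f`, where `a_mᴴ` is the `m`-th row of `A`. -/
def smGrad (A : Matrix (Fin M) (Fin N) ℂ) (b : Fin M → ℝ) (ε : ℝ) (f : Fin N → ℂ) :
    Fin N → ℂ := fun n =>
  ∑ m, (((1 - b m / Real.sqrt (‖A.mulVec f m‖ ^ 2 + ε)) : ℝ) : ℂ)
      * (star (A m n) * A.mulVec f m)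

end AWF

namespace AWF

/-- The ℓ²→ℓ² operator (spectral) norm of a matrix. -/
def opNorm {M N : ℕ} (A : Matrix (Fin M) (Fin N) ℂ) : ℝ :=
  ‖LinearMap.toContinuousLinearMap (Matrix.toEuclideanLin A)‖

end AWF


/-!
Each summand of `t ↦ L_ε(f + t u)` has the form `ψ = (√q − b)²` with
`q(t) = ‖c + t d‖² + ε`, a quadratic with constant second derivative `q'' = 2‖d‖²`. A direct
computation gives `ψ'' = q'' − (b / √q) (q'' − q'² / (2q))`, and Cauchy–Schwarz gives
`q'² ≤ 2 q'' q`, so `ψ'' ≤ q'' = 2 |(Au)_m|²` as soon as `b ≥ 0`. Summing over `m` and using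
`‖Au‖² ≤ ‖A‖² ‖u‖²` gives the bound.
-/

namespace AWF

section SqrtSubSq

variable {q q' : ℝ → ℝ} {κ b t : ℝ}

theorem hasDerivAt_sqrt_sub_sq (hq : HasDerivAt q (q' t) t) (hpos : 0 < q t) :
    HasDerivAt (fun s => (√(q s) - b) ^ 2) ((1 - b / √(q t)) * q' t) t := by
  have hs : 0 < √(q t) := Real.sqrt_pos.2 hpos
  refine (((hq.sqrt hpos.ne').sub_const b).pow 2).congr_deriv ?_
  field_simp
  ring

theorem hasDerivAt_one_sub_div_sqrt_mul (hq : HasDerivAt q (q' t) t) (hq' : HasDerivAt q' κ t)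
    (hpos : 0 < q t) :
    HasDerivAt (fun s => (1 - b / √(q s)) * q' s)
      ((1 - b / √(q t)) * κ + b * q' t ^ 2 / (2 * √(q t) ^ 3)) t := by
  have hs : 0 < √(q t) := Real.sqrt_pos.2 hpos
  refine ((((hasDerivAt_const t b).div (hq.sqrt hpos.ne') hs.ne').const_sub 1).mul
    hq').congr_deriv ?_
  simp only [Pi.div_apply]
  field_simp
  ring

theorem one_sub_div_sqrt_mul_add_le {Q Q' : ℝ} (hb : 0 ≤ b) (hQ : 0 < Q)
    (hcurv : Q' ^ 2 ≤ 2 * κ * Q) :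
    (1 - b / √Q) * κ + b * Q' ^ 2 / (2 * √Q ^ 3) ≤ κ := by
  have hs : 0 < √Q := Real.sqrt_pos.2 hQ
  have hsq : √Q ^ 2 = Q := Real.sq_sqrt hQ.le
  have hgap : 0 ≤ κ - Q' ^ 2 / (2 * Q) := by
    rw [sub_nonneg, div_le_iff₀ (by positivity)]
    linarith
  have hrw : (1 - b / √Q) * κ + b * Q' ^ 2 / (2 * √Q ^ 3)
      = κ - b / √Q * (κ - Q' ^ 2 / (2 * Q)) := by
    field_simp
    rw [hsq]
    ring
  rw [hrw]
  have : 0 ≤ b / √Q * (κ - Q' ^ 2 / (2 * Q)) := by positivity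
  linarith

theorem exists_sqrt_sub_sq_second_deriv_le (hq : ∀ t, HasDerivAt q (q' t) t)
    (hq' : ∀ t, HasDerivAt q' κ t) (hpos : ∀ t, 0 < q t) (hcurv : ∀ t, q' t ^ 2 ≤ 2 * κ * q t)
    (hb : 0 ≤ b) :
    ∃ ψ' ψ'' : ℝ → ℝ,
      (∀ t, HasDerivAt (fun s => (√(q s) - b) ^ 2) (ψ' t) t) ∧
      (∀ t, HasDerivAt ψ' (ψ'' t) t) ∧ ∀ t, ψ'' t ≤ κ :=
  ⟨_, _, fun t => hasDerivAt_sqrt_sub_sq (hq t) (hpos t),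
    fun t => hasDerivAt_one_sub_div_sqrt_mul (hq t) (hq' t) (hpos t),
    fun t => one_sub_div_sqrt_mul_add_le hb (hpos t) (hcurv t)⟩

end SqrtSubSq

section Line

variable {E : Type*} [NormedAddCommGroup E] [InnerProductSpace ℝ E]

theorem hasDerivAt_norm_line_sq (c d : E) (t : ℝ) :
    HasDerivAt (fun s : ℝ => ‖c + s • d‖ ^ 2) (2 * inner ℝ (c + t • d) d) t := by
  simpa using (((hasDerivAt_id t).smul_const d).const_add c).norm_sq

theorem hasDerivAt_two_mul_inner_line (c d : E) (t : ℝ) :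
    HasDerivAt (fun s : ℝ => 2 * inner ℝ (c + s • d) d) (2 * ‖d‖ ^ 2) t := by
  have h : HasDerivAt (fun s : ℝ => 2 * (inner ℝ c d + s * ‖d‖ ^ 2)) (2 * ‖d‖ ^ 2) t := by
    simpa using ((hasDerivAt_id t).mul_const (‖d‖ ^ 2)).const_add (inner ℝ c d) |>.const_mul 2
  convert h using 2 with s
  rw [inner_add_left, real_inner_smul_left, real_inner_self_eq_norm_sq]

theorem exists_sqrt_norm_line_sub_sq_second_deriv_le (c d : E) {ε b : ℝ} (hε : 0 < ε)
    (hb : 0 ≤ b) :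
    ∃ ψ' ψ'' : ℝ → ℝ,
      (∀ t, HasDerivAt (fun s : ℝ => (√(‖c + s • d‖ ^ 2 + ε) - b) ^ 2) (ψ' t) t) ∧
      (∀ t, HasDerivAt ψ' (ψ'' t) t) ∧ ∀ t, ψ'' t ≤ 2 * ‖d‖ ^ 2 := by
  refine exists_sqrt_sub_sq_second_deriv_le
    (fun t => (hasDerivAt_norm_line_sq c d t).add_const ε)
    (hasDerivAt_two_mul_inner_line c d) (fun t => by positivity) (fun t => ?_) hb
  have hcs := abs_real_inner_le_norm (c + t • d) d
  have : inner ℝ (c + t • d) d ^ 2 ≤ (‖c + t • d‖ * ‖d‖) ^ 2 := by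
    rw [← sq_abs]; gcongr
  nlinarith [sq_nonneg ‖d‖]

end Line

theorem sum_norm_mulVec_sq_le {M N : ℕ} (A : Matrix (Fin M) (Fin N) ℂ) (u : Fin N → ℂ) :
    ∑ m, ‖(A *ᵥ u) m‖ ^ 2 ≤ opNorm A ^ 2 * ∑ n, ‖u n‖ ^ 2 := by
  have h := pow_le_pow_left₀ (norm_nonneg _)
    ((LinearMap.toContinuousLinearMap (toEuclideanLin A)).le_opNorm (WithLp.toLp 2 u)) 2
  rwa [mul_pow, EuclideanSpace.norm_sq_eq, EuclideanSpace.norm_sq_eq] at h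

theorem smLoss_add_smul {M N : ℕ} (A : Matrix (Fin M) (Fin N) ℂ) (b : Fin M → ℝ) (ε : ℝ)
    (f u : Fin N → ℂ) (s : ℝ) :
    smLoss A b ε (f + s • u) = ∑ m, (√(‖(A *ᵥ f) m + s • (A *ᵥ u) m‖ ^ 2 + ε) - b m) ^ 2 := by
  simp only [smLoss, mulVec_add, mulVec_smul, Pi.add_apply, Pi.smul_apply]

/-- For every `ε > 0`, `f`, `u`, the function `φ(t) = L_ε(f + t u)` is
twice differentiable on ℝ with `φ''(t) ≤ 2 ‖A‖² ‖u‖₂²`. -/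
theorem smLoss_line_second_deriv_bound
    {M N : ℕ} (A : Matrix (Fin M) (Fin N) ℂ) (b : Fin M → ℝ) (hb : ∀ m, 0 ≤ b m)
    (ε : ℝ) (hε : 0 < ε) (f u : Fin N → ℂ) :
    ∃ φ' φ'' : ℝ → ℝ,
      (∀ t : ℝ, HasDerivAt (fun s : ℝ => smLoss A b ε (f + s • u)) (φ' t) t) ∧
      (∀ t : ℝ, HasDerivAt φ' (φ'' t) t) ∧
      (∀ t : ℝ, φ'' t ≤ 2 * opNorm A ^ 2 * ∑ n, ‖u n‖ ^ 2) := by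
  choose ψ' ψ'' hψ' hψ'' hle using fun m =>
    exists_sqrt_norm_line_sub_sq_second_deriv_le ((A *ᵥ f) m) ((A *ᵥ u) m) hε (hb m)
  refine ⟨fun t => ∑ m, ψ' m t, fun t => ∑ m, ψ'' m t, fun t => ?_,
    fun t => HasDerivAt.fun_sum fun m _ => hψ'' m t, fun t => ?_⟩
  · simp_rw [smLoss_add_smul]
    exact HasDerivAt.fun_sum fun m _ => hψ' m t
  · calc ∑ m, ψ'' m t ≤ ∑ m, 2 * ‖(A *ᵥ u) m‖ ^ 2 := Finset.sum_le_sum fun m _ => hle m t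
      _ = 2 * ∑ m, ‖(A *ᵥ u) m‖ ^ 2 := (Finset.mul_sum ..).symm
      _ ≤ 2 * opNorm A ^ 2 * ∑ n, ‖u n‖ ^ 2 := by
        rw [mul_assoc]; gcongr; exact sum_norm_mulVec_sq_le A u

end AWF
end
end

section
/- For every ε > 0 and every f ∈ ℂ^N, one Wirtinger gradient step with step size μ̄ = 1/L̄ on the smoothed loss decreases it: L_ε(f − μ̄·g_ε(f)) ≤ L_ε(f) − μ̄·‖g_ε(f)‖₂², where L̄ = λmax(A^H A) is assumed positive. -/
/-
Each summand `φ(y) = (√(|y|² + ε) − b)²` of the loss is majorized by its first-order expansion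
at `y` plus `|y' − y|²`: writing `s = √(|y|² + ε)`, `s' = √(|y'|² + ε)`, the gap is
`(2b/s)(s s' − ε − Re(ȳ y'))`, which is nonnegative by Cauchy–Schwarz for the vectors
`(y, √ε)` and `(y', √ε)` in `ℂ × ℝ`. Summing over the rows with `y = (Af)_m`, the linear terms
assemble into `2 Re⟨g_ε(f), d⟩` and the quadratic ones into `‖A d‖² ≤ λmax(AᴴA) ‖d‖²`
(since `AᴴA ≤ λmax · 1` in the Loewner order). A quadratic majorant with curvature `L̄` gives the
decrease `‖g‖²/L̄` for the step `d = −g/L̄`.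
-/

open scoped BigOperators
open Matrix

noncomputable section

open ComplexConjugate

namespace AWF

lemma re_conj_mul_add_le_sqrt_mul_sqrt {ε : ℝ} (hε : 0 ≤ ε) (y y' : ℂ) :
    (conj y * y').re + ε ≤ √(‖y‖ ^ 2 + ε) * √(‖y'‖ ^ 2 + ε) := by
  have hre : (conj y * y').re ≤ ‖y‖ * ‖y'‖ := by
    simpa [Complex.norm_conj] using Complex.re_le_norm (conj y * y')
  have hcs : (‖y‖ * ‖y'‖ + ε) ^ 2 ≤ (‖y‖ ^ 2 + ε) * (‖y'‖ ^ 2 + ε) := by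
    nlinarith [sq_nonneg (‖y‖ - ‖y'‖)]
  rw [← Real.sqrt_mul (by positivity)]
  linarith [Real.le_sqrt_of_sq_le hcs]

lemma sq_sqrt_norm_sq_add_sub_le {ε b : ℝ} (hε : 0 < ε) (hb : 0 ≤ b) (y y' : ℂ) :
    (√(‖y'‖ ^ 2 + ε) - b) ^ 2 ≤ (√(‖y‖ ^ 2 + ε) - b) ^ 2
      + 2 * (1 - b / √(‖y‖ ^ 2 + ε)) * (conj y * (y' - y)).re + ‖y' - y‖ ^ 2 := by
  set s := √(‖y‖ ^ 2 + ε)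
  set s' := √(‖y'‖ ^ 2 + ε)
  have hs : 0 < s := Real.sqrt_pos.mpr (by positivity)
  have hs2 : s ^ 2 = ‖y‖ ^ 2 + ε := Real.sq_sqrt (by positivity)
  have hs2' : s' ^ 2 = ‖y'‖ ^ 2 + ε := Real.sq_sqrt (by positivity)
  have hexpand : ‖y' - y‖ ^ 2 = ‖y'‖ ^ 2 - ‖y‖ ^ 2 - 2 * (conj y * (y' - y)).re := by
    simp only [Complex.sq_norm, Complex.normSq_apply, Complex.mul_re, Complex.sub_re,
      Complex.sub_im, Complex.conj_re, Complex.conj_im]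
    ring
  have hcross : (conj y * (y' - y)).re = (conj y * y').re - ‖y‖ ^ 2 := by
    rw [mul_sub, Complex.sub_re, Complex.conj_mul', ← Complex.ofReal_pow, Complex.ofReal_re]
  have hgap : 0 ≤ b / s * (s * s' - s ^ 2 - (conj y * (y' - y)).re) :=
    mul_nonneg (by positivity) (by linarith [re_conj_mul_add_le_sqrt_mul_sqrt hε.le y y'])
  have hbs : b / s * s = b := div_mul_cancel₀ b hs.ne'
  have hbss' : b / s * s * s' = b * s' := by rw [hbs]
  have hbss : b / s * s ^ 2 = b * s := by rw [sq, ← mul_assoc, hbs]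
  linarith

end AWF

namespace Matrix

variable {𝕜 n : Type*} [RCLike 𝕜] [Fintype n]

lemma re_star_dotProduct_self (v : n → 𝕜) : RCLike.re (star v ⬝ᵥ v) = ∑ i, ‖v i‖ ^ 2 := by
  simp [dotProduct, RCLike.conj_mul]

open MatrixOrder in
lemma IsHermitian.re_dotProduct_mulVec_le_iSup_eigenvalues [DecidableEq n] {H : Matrix n n 𝕜}
    (hH : H.IsHermitian) (v : n → 𝕜) :
    RCLike.re (star v ⬝ᵥ (H *ᵥ v)) ≤ (⨆ i, hH.eigenvalues i) * RCLike.re (star v ⬝ᵥ v) := by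
  have hle : H ≤ algebraMap ℝ _ (⨆ i, hH.eigenvalues i) := by
    refine le_algebraMap_of_spectrum_le (fun x hx => ?_) hH.isSelfAdjoint
    rw [hH.spectrum_real_eq_range_eigenvalues] at hx
    obtain ⟨i, rfl⟩ := hx
    exact le_ciSup (Set.finite_range _).bddAbove i
  simpa [sub_mulVec, dotProduct_sub, Algebra.algebraMap_eq_smul_one, smul_mulVec,
    dotProduct_smul, RCLike.smul_re] using (le_iff.mp hle).re_dotProduct_nonneg v

end Matrix

lemma apply_sub_smul_le_of_quadratic_majorant {ι : Type*} [Fintype ι] (F : (ι → ℂ) → ℝ) {L : ℝ}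
    (hL : 0 < L) (f g : ι → ℂ)
    (hF : ∀ d, F (f + d) ≤ F f + 2 * (star g ⬝ᵥ d).re + L * ∑ i, ‖d i‖ ^ 2) :
    F (f - (1 / L) • g) ≤ F f - (1 / L) * ∑ i, ‖g i‖ ^ 2 := by
  have hstep := hF (-((1 / L) • g))
  have hinner : (star g ⬝ᵥ -((1 / L) • g)).re = -(1 / L) * ∑ i, ‖g i‖ ^ 2 := by
    simp [← re_star_dotProduct_self, dotProduct_smul, Complex.real_smul]
  have hsq : ∑ i, ‖(-((1 / L) • g)) i‖ ^ 2 = (1 / L) ^ 2 * ∑ i, ‖g i‖ ^ 2 := by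
    simp [mul_pow, Finset.mul_sum]
  rw [← sub_eq_add_neg, hinner, hsq] at hstep
  have hcurv : L * ((1 / L) ^ 2 * ∑ i, ‖g i‖ ^ 2) = 1 / L * ∑ i, ‖g i‖ ^ 2 := by
    field_simp
  linarith

namespace AWF

lemma sum_norm_mulVec_sq_le_lamMax {M N : ℕ} (A : Matrix (Fin M) (Fin N) ℂ) (v : Fin N → ℂ) :
    ∑ m, ‖(A *ᵥ v) m‖ ^ 2 ≤ lamMax A * ∑ n, ‖v n‖ ^ 2 := by
  have := IsHermitian.re_dotProduct_mulVec_le_iSup_eigenvalues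
    (isHermitian_conjTranspose_mul_self A) v
  rwa [← mulVec_mulVec, dotProduct_mulVec, ← star_mulVec, re_star_dotProduct_self,
    re_star_dotProduct_self] at this

lemma smGrad_eq {M N : ℕ} (A : Matrix (Fin M) (Fin N) ℂ) (b : Fin M → ℝ) (ε : ℝ)
    (f : Fin N → ℂ) :
    smGrad A b ε f = Aᴴ *ᵥ fun m =>
      (((1 - b m / √(‖(A *ᵥ f) m‖ ^ 2 + ε)) : ℝ) : ℂ) * (A *ᵥ f) m := by
  ext n
  simp only [smGrad, mulVec, dotProduct, conjTranspose_apply]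
  exact Finset.sum_congr rfl fun m _ => by ring

lemma smLoss_add_le {M N : ℕ} (A : Matrix (Fin M) (Fin N) ℂ) {b : Fin M → ℝ}
    (hb : ∀ m, 0 ≤ b m) {ε : ℝ} (hε : 0 < ε) (f d : Fin N → ℂ) :
    smLoss A b ε (f + d) ≤ smLoss A b ε f + 2 * (star (smGrad A b ε f) ⬝ᵥ d).re
      + ∑ m, ‖(A *ᵥ d) m‖ ^ 2 := by
  have hcross : (star (smGrad A b ε f) ⬝ᵥ d).re = ∑ m,
      (1 - b m / √(‖(A *ᵥ f) m‖ ^ 2 + ε)) * (conj ((A *ᵥ f) m) * (A *ᵥ d) m).re := by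
    rw [smGrad_eq, star_mulVec, conjTranspose_conjTranspose, ← dotProduct_mulVec,
      dotProduct, Complex.re_sum]
    refine Finset.sum_congr rfl fun m _ => ?_
    simp [mul_assoc]
  rw [hcross, smLoss, smLoss, Finset.mul_sum, ← Finset.sum_add_distrib, ← Finset.sum_add_distrib]
  refine Finset.sum_le_sum fun m _ => ?_
  simpa [mulVec_add, mul_assoc] using
    sq_sqrt_norm_sq_add_sub_le hε (hb m) ((A *ᵥ f) m) ((A *ᵥ (f + d)) m)

/-- One Wirtinger gradient step with step size `μ̄ = 1/λmax(AᴴA)`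
decreases the smoothed loss: `L_ε(f − μ̄ g_ε(f)) ≤ L_ε(f) − μ̄ ‖g_ε(f)‖₂²`. -/
theorem smLoss_descent_step
    {M N : ℕ} (A : Matrix (Fin M) (Fin N) ℂ) (b : Fin M → ℝ) (hb : ∀ m, 0 ≤ b m)
    (hpos : 0 < lamMax A) (ε : ℝ) (hε : 0 < ε) (f : Fin N → ℂ) :
    smLoss A b ε (f - (1 / lamMax A) • smGrad A b ε f)
      ≤ smLoss A b ε f - (1 / lamMax A) * norm2 (smGrad A b ε f) ^ 2 := by
  rw [norm2, Real.sq_sqrt (Finset.sum_nonneg fun _ _ => sq_nonneg _)]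
  refine apply_sub_smul_le_of_quadratic_majorant (smLoss A b ε) hpos f _ fun d => ?_
  grw [smLoss_add_le A hb hε f d, sum_norm_mulVec_sq_le_lamMax A d]

end AWF
end
end
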